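/- For every x > 0 and s ≥ 1 the inequality 0 ≤ Φ_{2s+1}(x)/Φ_{2s-1}(x) < x²/(2s(2s+1)) holds. -/

import Mathlib

/-!
For `|z| > 1`, `1 / (z ^ 2 - 1) ^ (t + 1) = ∑ₖ C(k + t, t) / z ^ (2t + 2 + 2k)`. Integrating this
against `exp (x z)` term by term, Cauchy's formula for derivatives turns each term into a Taylor
coefficient of `exp (x z)`, so `Φ_{2t+1}(x) = ∑ₖ C(k + t, t) x ^ (2t + 1 + 2k) / (2t + 1 + 2k)!`,
a series of positive terms `a_{t,k}` for `x > 0`. These satisfy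
`(2t + 2)(2t + 3 + 2k) · a_{t+1,k} = x² · a_{t,k}`, hence
`(2t + 2)(2t + 3) Φ_{2t+3}(x) < x² Φ_{2t+1}(x)`, strictly because of the terms with `k ≥ 1`.
-/

open Complex Metric

theorem hasSum_choose_div_pow_of_one_lt_norm {𝕜 : Type*} [NormedField 𝕜]
    [CompleteSpace 𝕜] (t : ℕ) {z : 𝕜} (hz : 1 < ‖z‖) :
    HasSum (fun k : ℕ => ((k + t).choose t : 𝕜) / z ^ (2 * t + 2 + 2 * k))
      (1 / ((z - 1) ^ (t + 1) * (z + 1) ^ (t + 1))) := by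
  have hz0 : z ≠ 0 := norm_pos_iff.mp (one_pos.trans hz)
  have hw : ‖(z ^ 2)⁻¹‖ < 1 := by
    rw [norm_inv, norm_pow]
    exact inv_lt_one_of_one_lt₀ (one_lt_pow₀ hz two_ne_zero)
  have hz2 : z ^ 2 - 1 ≠ 0 := by
    intro h
    have : ‖z‖ ^ 2 = 1 := by rw [← norm_pow, sub_eq_zero.mp h, norm_one]
    nlinarith
  convert (hasSum_choose_mul_geometric_of_norm_lt_one t hw).div_const (z ^ (2 * t + 2))
    using 1
  · funext k
    rw [inv_pow, ← pow_mul]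
    field_simp
    ring
  · have : (z - 1) ^ (t + 1) * (z + 1) ^ (t + 1) = (z ^ 2 - 1) ^ (t + 1) := by
      rw [← mul_pow]; ring
    rw [this, div_div, show 2 * t + 2 = 2 * (t + 1) by ring, pow_mul, ← mul_pow]
    congr 3
    field_simp

theorem hasSum_circleIntegral_of_norm_le {ι E : Type*} [Countable ι] [NormedAddCommGroup E]
    [NormedSpace ℂ E] {F : ι → ℂ → E} {f : ℂ → E} {c : ℂ} {R : ℝ}
    (hR : 0 ≤ R) (hF : ∀ i, ContinuousOn (F i) (sphere c R)) {bound : ι → ℝ}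
    (hbound : ∀ i, ∀ z ∈ sphere c R, ‖F i z‖ ≤ bound i) (hsummable : Summable bound)
    (hsum : ∀ z ∈ sphere c R, HasSum (fun i => F i z) (f z)) :
    HasSum (fun i => ∮ z in C(c, R), F i z) (∮ z in C(c, R), f z) := by
  have hmem : ∀ θ, circleMap c R θ ∈ sphere c R := circleMap_mem_sphere c hR
  refine intervalIntegral.hasSum_integral_of_dominated_convergence (fun i _ => R * bound i)
    (fun i => ?_) (fun i => ?_) ?_ intervalIntegrable_const ?_
  · simp only [deriv_circleMap]
    exact (((continuous_circleMap 0 R).mul continuous_const).smul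
      ((hF i).comp_continuous (continuous_circleMap c R) hmem)).aestronglyMeasurable
  · refine Filter.Eventually.of_forall fun θ _ => ?_
    rw [norm_smul, deriv_circleMap, norm_mul, norm_circleMap_zero, norm_I, mul_one,
      abs_of_nonneg hR]
    exact mul_le_mul_of_nonneg_left (hbound i _ (hmem θ)) hR
  · exact Filter.Eventually.of_forall fun θ _ => hsummable.mul_left R
  · exact Filter.Eventually.of_forall fun θ _ => (hsum _ (hmem θ)).const_smul _

theorem circleIntegral_exp_mul_div_pow {R : ℝ} (hR : 0 < R) (x : ℂ) (n : ℕ) :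
    (∮ z in C(0, R), exp (x * z) / z ^ (n + 1)) = 2 * Real.pi * I * (x ^ n / n.factorial) := by
  have h := (differentiable_exp.comp (differentiable_id.const_mul x)).differentiableOn
    |>.circleIntegral_one_div_sub_center_pow_smul (c := 0) hR n
  simp only [Function.comp_def, id, sub_zero, smul_eq_mul, iteratedDeriv_cexp_const_mul,
    mul_zero, exp_zero] at h
  convert h using 1
  · congr 1; funext z; ring
  · ring

/-- The `k`-th term of the series for `Φ_{2t+1}(x)`, which is `Φ t x` in `stmt_11`. -/
noncomputable def fundamentalTerm {𝕜 : Type*} [Field 𝕜] (t : ℕ) (x : 𝕜) (k : ℕ) : 𝕜 :=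
  (k + t).choose t * x ^ (2 * t + 1 + 2 * k) / (2 * t + 1 + 2 * k).factorial

theorem hasSum_fundamentalTerm (t : ℕ) (x : ℂ) {r : ℝ} (hr : 1 < r) :
    HasSum (fundamentalTerm t x) ((2 * Real.pi * I)⁻¹ *
      ∮ z in C(0, r), exp (x * z) / ((z - 1) ^ (t + 1) * (z + 1) ^ (t + 1))) := by
  have hr0 : 0 < r := one_pos.trans hr
  have hsum := hasSum_circleIntegral_of_norm_le (c := 0) hr0.le
    (f := fun z => exp (x * z) / ((z - 1) ^ (t + 1) * (z + 1) ^ (t + 1)))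
    (F := fun k z => ((k + t).choose t : ℂ) * (exp (x * z) / z ^ (2 * t + 1 + 2 * k + 1)))
    (bound := fun k => Real.exp (‖x‖ * r) * ((k + t).choose t / r ^ (2 * t + 2 + 2 * k)))
    (fun k => ?_) (fun k z hz => ?_) ?_ (fun z hz => ?_)
  · refine (hsum.mul_left (2 * Real.pi * I)⁻¹).congr_fun fun k => ?_
    rw [circleIntegral.integral_const_mul, circleIntegral_exp_mul_div_pow hr0, fundamentalTerm]
    field_simp [two_pi_I_ne_zero]
  · have hz0 : ∀ z ∈ sphere (0 : ℂ) r, z ^ (2 * t + 1 + 2 * k + 1) ≠ 0 := fun z hz =>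
      pow_ne_zero _ (norm_pos_iff.mp (by rwa [mem_sphere_zero_iff_norm.mp hz]))
    fun_prop (disch := assumption)
  · rw [mem_sphere_zero_iff_norm] at hz
    rw [norm_mul, norm_div, norm_pow, hz, Complex.norm_natCast,
      show 2 * t + 1 + 2 * k + 1 = 2 * t + 2 + 2 * k by ring, mul_div_assoc', mul_div_assoc',
      mul_comm]
    gcongr
    calc ‖exp (x * z)‖ ≤ Real.exp ‖x * z‖ := norm_exp_le_exp_norm _
      _ = Real.exp (‖x‖ * r) := by rw [norm_mul, hz]
  · refine Summable.mul_left _ (hasSum_choose_div_pow_of_one_lt_norm t ?_).summable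
    rwa [Real.norm_of_nonneg hr0.le]
  · rw [mem_sphere_zero_iff_norm] at hz
    have h := (hasSum_choose_div_pow_of_one_lt_norm t (hz ▸ hr)).mul_left (exp (x * z))
    rw [mul_one_div] at h
    refine h.congr_fun fun k => ?_
    rw [show 2 * t + 1 + 2 * k + 1 = 2 * t + 2 + 2 * k by ring]
    ring

theorem fundamentalTerm_ofReal (t : ℕ) (x : ℝ) (k : ℕ) :
    fundamentalTerm t (x : ℂ) k = ((fundamentalTerm t x k : ℝ) : ℂ) := by
  simp [fundamentalTerm]

noncomputable def fundamentalSeries (t : ℕ) (x : ℝ) : ℝ := ∑' k, fundamentalTerm t x k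

theorem summable_fundamentalTerm (t : ℕ) (x : ℝ) : Summable (fundamentalTerm t x) :=
  Complex.summable_ofReal.mp
    ((hasSum_fundamentalTerm t x one_lt_two).summable.congr (fundamentalTerm_ofReal t x))

theorem circleIntegral_eq_fundamentalSeries (t : ℕ) (x : ℝ) {r : ℝ} (hr : 1 < r) :
    (2 * Real.pi * I)⁻¹ *
      ∮ z in C(0, r), exp (x * z) / ((z - 1) ^ (t + 1) * (z + 1) ^ (t + 1)) =
    fundamentalSeries t x := by
  rw [← (hasSum_fundamentalTerm t x hr).tsum_eq, fundamentalSeries, Complex.ofReal_tsum]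
  exact tsum_congr (fundamentalTerm_ofReal t x)

theorem fundamentalTerm_succ {𝕜 : Type*} [Field 𝕜] [CharZero 𝕜] (t : ℕ) (x : 𝕜) (k : ℕ) :
    (2 * t + 2) * (2 * t + 3 + 2 * k) * fundamentalTerm (t + 1) x k =
      x ^ 2 * fundamentalTerm t x k := by
  have hchoose : ((k + (t + 1)).choose (t + 1) : 𝕜) * (t + 1) = (k + t + 1) * (k + t).choose t :=
    mod_cast (Nat.add_one_mul_choose_eq (k + t) t).symm
  have hfact : ((2 * (t + 1) + 1 + 2 * k).factorial : 𝕜) =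
      (2 * t + 3 + 2 * k) * (2 * t + 2 + 2 * k) * (2 * t + 1 + 2 * k).factorial := by
    rw [show 2 * (t + 1) + 1 + 2 * k = 2 * t + 1 + 2 * k + 1 + 1 by ring, Nat.factorial_succ,
      Nat.factorial_succ]
    push_cast
    ring
  have hpow : x ^ (2 * (t + 1) + 1 + 2 * k) = x ^ 2 * x ^ (2 * t + 1 + 2 * k) := by
    rw [← pow_add]; ring_nf
  have h₁ : (2 * t + 3 + 2 * k : 𝕜) ≠ 0 := by exact_mod_cast (by omega : 2 * t + 3 + 2 * k ≠ 0)
  have h₂ : (t + 1 + k : 𝕜) ≠ 0 := by exact_mod_cast (by omega : t + 1 + k ≠ 0)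
  simp only [fundamentalTerm]
  rw [hfact, hpow]
  field_simp
  rw [mul_comm (t + 1 : 𝕜), hchoose]
  ring

theorem fundamentalTerm_pos (t : ℕ) {x : ℝ} (hx : 0 < x) (k : ℕ) :
    0 < fundamentalTerm t x k := by
  unfold fundamentalTerm
  have : 0 < (k + t).choose t := Nat.choose_pos (by omega)
  positivity

theorem fundamentalSeries_pos (t : ℕ) {x : ℝ} (hx : 0 < x) : 0 < fundamentalSeries t x :=
  (summable_fundamentalTerm t x).tsum_pos (fun k => (fundamentalTerm_pos t hx k).le) 0
    (fundamentalTerm_pos t hx 0)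

theorem mul_fundamentalSeries_succ_lt (t : ℕ) {x : ℝ} (hx : 0 < x) :
    (2 * t + 2) * (2 * t + 3) * fundamentalSeries (t + 1) x < x ^ 2 * fundamentalSeries t x := by
  rw [fundamentalSeries, fundamentalSeries, ← tsum_mul_left, ← tsum_mul_left]
  refine Summable.tsum_lt_tsum (i := 1) (fun k => ?_) ?_
    ((summable_fundamentalTerm _ x).mul_left _) ((summable_fundamentalTerm t x).mul_left _)
  all_goals rw [← fundamentalTerm_succ]
  · exact mul_le_mul_of_nonneg_right
      (mul_le_mul_of_nonneg_left (by linarith [k.cast_nonneg (α := ℝ)]) (by positivity))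
      (fundamentalTerm_pos _ hx k).le
  · exact mul_lt_mul_of_pos_right
      (mul_lt_mul_of_pos_left (by norm_num) (by positivity)) (fundamentalTerm_pos _ hx 1)

theorem stmt_11 (r : ℝ) (hr : 1 < r) (Φ : ℕ → ℂ → ℂ)
    (hΦ : ∀ s x, Φ s x = (2 * Real.pi * Complex.I)⁻¹ *
      ∮ z in C(0, r), Complex.exp (x * z) / ((z - 1) ^ (s + 1) * (z + 1) ^ (s + 1))) :
    ∀ s : ℕ, 1 ≤ s → ∀ x : ℝ, 0 < x →
      (Φ s x / Φ (s - 1) x).im = 0 ∧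
      0 ≤ (Φ s x / Φ (s - 1) x).re ∧
      (Φ s x / Φ (s - 1) x).re < x ^ 2 / (2 * s * (2 * s + 1)) := by
  intro s hs x hx
  obtain ⟨t, rfl⟩ : ∃ t, s = t + 1 := ⟨s - 1, by omega⟩
  simp only [hΦ, Nat.add_sub_cancel, circleIntegral_eq_fundamentalSeries _ _ hr,
    ← Complex.ofReal_div, Complex.ofReal_re]
  have hpos := fundamentalSeries_pos t hx
  refine ⟨Complex.ofReal_im _, div_nonneg (fundamentalSeries_pos _ hx).le hpos.le, ?_⟩
  rw [div_lt_div_iff₀ hpos (by positivity)]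
  push_cast
  linarith [mul_fundamentalSeries_succ_lt t hx]
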